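/- arXiv:1909.00305 — 5 statements merged into one kernel-verified Lean document; each statement's English description precedes it below -/
import Mathlib

section
/- Let H be a finite-dimensional real inner product space, M ⊆ H a closed convex set (e.g. a closed ball), F : H → ℝ continuously differentiable with ∇F Lipschitz continuous on M with constant L_M > 0, G : H → ℝ convex and continuous, and E = F + G. Let (α_k) satisfy 0 < α_k < 1/L_M, let Φ₀ ∈ M, and define Φ_{k+1} as the minimizer over Φ ∈ H of G(Φ) + ⟨∇F(Φ_k), Φ − Φ_k⟩ + (1/(2α_k))‖Φ − Φ_k‖². If Φ_k ∈ M for all k ≥ 0, then for every k: E(Φ_k) − E(Φ_{k+1}) ≥ (1/(2α_k) − L_M/2)‖Φ_{k+1} − Φ_k‖². -/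
/-!
The descent lemma bounds `F (Φ (k+1))` by its linearization at `Φ k` plus `L_M/2 ‖Φ (k+1) - Φ k‖²`,
while comparing the proximal objective at its minimizer `Φ (k+1)` with its value at `Φ k` bounds
`G (Φ (k+1))` by `G (Φ k)` minus the same linear term and `1/(2 α_k) ‖Φ (k+1) - Φ k‖²`.
Adding the two inequalities gives the claim.
-/

open RealInnerProductSpace

section

variable {H : Type*} [NormedAddCommGroup H] [InnerProductSpace ℝ H] [CompleteSpace H]

theorem HasGradientAt.hasDerivAt_comp_add_smul {f : H → ℝ} {g x d : H} {t : ℝ}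
    (h : HasGradientAt f g (x + t • d)) :
    HasDerivAt (fun s : ℝ => f (x + s • d)) ⟪g, d⟫ t := by
  have hline : HasDerivAt (fun s : ℝ => x + s • d) d t := by
    simpa using ((hasDerivAt_id t).smul_const d).const_add x
  have h' := h.hasFDerivAt.comp_hasDerivAt t hline
  rwa [InnerProductSpace.toDual_apply_apply] at h'

theorem Convex.le_add_inner_gradient_add_half_mul_sq {M : Set H} (hM : Convex ℝ M)
    {f : H → ℝ} (hf : Differentiable ℝ f) {L : ℝ}
    (hlip : ∀ x ∈ M, ∀ y ∈ M, ‖gradient f x - gradient f y‖ ≤ L * ‖x - y‖)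
    {x y : H} (hx : x ∈ M) (hy : y ∈ M) :
    f y ≤ f x + ⟪gradient f x, y - x⟫ + L / 2 * ‖y - x‖ ^ 2 := by
  set d := y - x
  -- `φ` is antitone on `[0, 1]`, and `φ 1 ≤ φ 0` is the claim.
  set φ : ℝ → ℝ := fun t => f (x + t • d) - t * ⟪gradient f x, d⟫ - L / 2 * t ^ 2 * ‖d‖ ^ 2
  have hφ : ∀ t : ℝ, HasDerivAt φ
      (⟪gradient f (x + t • d) - gradient f x, d⟫ - L * t * ‖d‖ ^ 2) t := by
    intro t
    have h := (((hf (x + t • d)).hasGradientAt.hasDerivAt_comp_add_smul).sub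
      ((hasDerivAt_id t).mul_const ⟪gradient f x, d⟫)).sub
      (((hasDerivAt_pow 2 t).const_mul (L / 2)).mul_const (‖d‖ ^ 2))
    refine h.congr_deriv ?_
    rw [inner_sub_left]
    ring
  have hφ'_nonpos : ∀ t ∈ Set.Ioo (0 : ℝ) 1,
      ⟪gradient f (x + t • d) - gradient f x, d⟫ - L * t * ‖d‖ ^ 2 ≤ 0 := by
    intro t ht
    have hlip_t : ‖gradient f (x + t • d) - gradient f x‖ ≤ L * (t * ‖d‖) := by
      simpa [norm_smul, abs_of_pos ht.1] using
        hlip _ (hM.add_smul_sub_mem hx hy ⟨ht.1.le, ht.2.le⟩) _ hx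
    rw [sub_nonpos]
    calc ⟪gradient f (x + t • d) - gradient f x, d⟫
        ≤ ‖gradient f (x + t • d) - gradient f x‖ * ‖d‖ := real_inner_le_norm _ _
      _ ≤ L * (t * ‖d‖) * ‖d‖ := by gcongr
      _ = L * t * ‖d‖ ^ 2 := by ring
  have hanti : AntitoneOn φ (Set.Icc 0 1) := by
    refine antitoneOn_of_hasDerivWithinAt_nonpos (convex_Icc 0 1)
      (fun t _ => (hφ t).continuousAt.continuousWithinAt)
      (fun t _ => (hφ t).hasDerivWithinAt) ?_
    simpa only [interior_Icc] using hφ'_nonpos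
  have h10 : φ 1 ≤ φ 0 := hanti (by simp) (by simp) zero_le_one
  simp only [φ, one_smul, zero_smul, add_zero, d, add_sub_cancel] at h10
  linarith

end

theorem prox_grad_sufficient_decrease_general
    {H : Type*} [NormedAddCommGroup H] [InnerProductSpace ℝ H]
    [FiniteDimensional ℝ H]
    (M : Set H) (hM_convex : Convex ℝ M)
    (F G : H → ℝ) (L_M : ℝ)
    (hF : ContDiff ℝ 1 F)
    (hF_lip : ∀ x ∈ M, ∀ y ∈ M, ‖gradient F x - gradient F y‖ ≤ L_M * ‖x - y‖)
    (E : H → ℝ) (hE : E = fun x => F x + G x)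
    (α : ℕ → ℝ)
    (Φ : ℕ → H)
    (hstep : ∀ k : ℕ, ∀ z : H,
      G (Φ (k + 1)) + ⟪gradient F (Φ k), Φ (k + 1) - Φ k⟫
          + (1 / (2 * α k)) * ‖Φ (k + 1) - Φ k‖ ^ 2
        ≤ G z + ⟪gradient F (Φ k), z - Φ k⟫ + (1 / (2 * α k)) * ‖z - Φ k‖ ^ 2)
    (hmem : ∀ k : ℕ, Φ k ∈ M) :
    ∀ k : ℕ,
      (1 / (2 * α k) - L_M / 2) * ‖Φ (k + 1) - Φ k‖ ^ 2 ≤ E (Φ k) - E (Φ (k + 1)) := by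
  intro k
  have hprox : G (Φ (k + 1)) + ⟪gradient F (Φ k), Φ (k + 1) - Φ k⟫
      + (1 / (2 * α k)) * ‖Φ (k + 1) - Φ k‖ ^ 2 ≤ G (Φ k) := by
    simpa using hstep k (Φ k)
  have hdescent := hM_convex.le_add_inner_gradient_add_half_mul_sq
    (hF.differentiable one_ne_zero) hF_lip (hmem k) (hmem (k + 1))
  subst hE
  linarith

/-- Sufficient decrease of the proximal gradient iterates (Proposition 4.1):
if `∇F` is `L_M`-Lipschitz on a closed convex set `M` containing all iterates,
`G` is convex continuous, and the step sizes satisfy `0 < α_k < 1/L_M`, then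
`E (Φ k) - E (Φ (k+1)) ≥ (1/(2 α_k) - L_M/2) ‖Φ (k+1) - Φ k‖²` for all `k`. -/
theorem prox_grad_sufficient_decrease
    {H : Type*} [NormedAddCommGroup H] [InnerProductSpace ℝ H]
    [FiniteDimensional ℝ H]
    (M : Set H) (hM_closed : IsClosed M) (hM_convex : Convex ℝ M)
    (F G : H → ℝ) (L_M : ℝ) (hL : 0 < L_M)
    (hF : ContDiff ℝ 1 F)
    (hF_lip : ∀ x ∈ M, ∀ y ∈ M, ‖gradient F x - gradient F y‖ ≤ L_M * ‖x - y‖)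
    (hG_convex : ConvexOn ℝ Set.univ G) (hG_cont : Continuous G)
    (E : H → ℝ) (hE : E = fun x => F x + G x)
    (α : ℕ → ℝ) (hα : ∀ k : ℕ, 0 < α k ∧ α k < 1 / L_M)
    (Φ : ℕ → H)
    (hstep : ∀ k : ℕ, ∀ z : H,
      G (Φ (k + 1)) + ⟪gradient F (Φ k), Φ (k + 1) - Φ k⟫
          + (1 / (2 * α k)) * ‖Φ (k + 1) - Φ k‖ ^ 2
        ≤ G z + ⟪gradient F (Φ k), z - Φ k⟫ + (1 / (2 * α k)) * ‖z - Φ k‖ ^ 2)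
    (hmem : ∀ k : ℕ, Φ k ∈ M) :
    ∀ k : ℕ,
      (1 / (2 * α k) - L_M / 2) * ‖Φ (k + 1) - Φ k‖ ^ 2 ≤ E (Φ k) - E (Φ (k + 1)) :=
  prox_grad_sufficient_decrease_general M hM_convex F G L_M hF hF_lip E hE α Φ hstep hmem
end

section
/- Let H be a finite-dimensional real inner product space, F : H → ℝ continuously differentiable with ∇F Lipschitz with constant L > 0 on a set M ⊆ H, G : H → ℝ convex and continuously differentiable, E = F + G, and let ᾱ > 0. Suppose Φ_{k−1}, Φ_k ∈ H, w ∈ [0,1], Φ̃ = Φ_k + w(Φ_k − Φ_{k−1}), α ≥ ᾱ, and Φ_{k+1} is a minimizer over Φ of G(Φ) + ⟨∇F(Φ̃), Φ − Φ̃⟩ + (1/(2α))‖Φ − Φ̃‖². If Φ̃, Φ_{k+1} ∈ M, then ‖∇E(Φ_{k+1})‖ ≤ (L + 1/ᾱ)(‖Φ_{k+1} − Φ_k‖ + w‖Φ_k − Φ_{k−1}‖). -/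
open RealInnerProductSpace

/-!
At the new iterate `Φp` the proximal model of the step is minimal, so its gradient vanishes:
`∇G Φp = -∇F Φt - α⁻¹ (Φp - Φt)`. Hence `∇E Φp = (∇F Φp - ∇F Φt) - α⁻¹ (Φp - Φt)`, whose norm is
at most `(L + 1/ᾱ) ‖Φp - Φt‖` by the Lipschitz bound and `α ≥ ᾱ`, and the triangle inequality gives
`‖Φp - Φt‖ ≤ ‖Φp - Φk‖ + w ‖Φk - Φkm‖`.
-/

section

variable {H : Type*} [NormedAddCommGroup H] [InnerProductSpace ℝ H] [CompleteSpace H]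

theorem IsLocalMin.hasGradientAt_eq_zero {f : H → ℝ} {g x : H} (h : IsLocalMin f x)
    (hf : HasGradientAt f g x) : g = 0 :=
  (InnerProductSpace.toDual ℝ H).map_eq_zero_iff.mp (h.hasFDerivAt_eq_zero hf.hasFDerivAt)

theorem HasGradientAt.add {f g : H → ℝ} {f' g' x : H} (hf : HasGradientAt f f' x)
    (hg : HasGradientAt g g' x) : HasGradientAt (fun y => f y + g y) (f' + g') x := by
  rw [hasGradientAt_iff_hasFDerivAt, map_add]
  exact hf.hasFDerivAt.add hg.hasFDerivAt

theorem HasGradientAt.const_mul {f : H → ℝ} {f' x : H} (hf : HasGradientAt f f' x) (c : ℝ) :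
    HasGradientAt (fun y => c * f y) (c • f') x := by
  rw [hasGradientAt_iff_hasFDerivAt, map_smul]
  exact hf.hasFDerivAt.const_mul c

theorem hasGradientAt_inner_sub (v a x : H) : HasGradientAt (fun y => ⟪v, y - a⟫) v x := by
  rw [hasGradientAt_iff_hasFDerivAt]
  simpa only [InnerProductSpace.toDual_apply_apply, inner_sub_right] using
    ((InnerProductSpace.toDual ℝ H v : StrongDual ℝ H).hasFDerivAt (x := x)).sub_const ⟪v, a⟫

theorem hasGradientAt_norm_sub_sq (a x : H) :
    HasGradientAt (fun y => ‖y - a‖ ^ 2) ((2 : ℝ) • (x - a)) x := by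
  rw [hasGradientAt_iff_hasFDerivAt]
  refine (hasFDerivAt_sub_const (x := x) a).norm_sq.congr_fderiv ?_
  ext u
  simp

/-- The objective of the proximal gradient step from `a` with step size `α`; `v` stands for `∇F a`. -/
noncomputable def proxModel (G : H → ℝ) (v a : H) (α : ℝ) (x : H) : ℝ :=
  G x + ⟪v, x - a⟫ + 1 / (2 * α) * ‖x - a‖ ^ 2

theorem hasGradientAt_proxModel {G : H → ℝ} {g x : H} (hG : HasGradientAt G g x) (v a : H)
    (α : ℝ) : HasGradientAt (proxModel G v a α) (g + v + α⁻¹ • (x - a)) x := by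
  have h : HasGradientAt (proxModel G v a α) (g + v + (1 / (2 * α)) • (2 : ℝ) • (x - a)) x :=
    (hG.add (hasGradientAt_inner_sub v a x)).add
      ((hasGradientAt_norm_sub_sq a x).const_mul (1 / (2 * α)))
  rwa [smul_smul, show 1 / (2 * α) * 2 = α⁻¹ by ring] at h

theorem HasGradientAt.eq_of_forall_proxModel_le {G : H → ℝ} {g v a p : H} {α : ℝ}
    (hG : HasGradientAt G g p) (hmin : ∀ x, proxModel G v a α p ≤ proxModel G v a α x) :
    g = -v - α⁻¹ • (p - a) := by
  have hloc : IsLocalMin (proxModel G v a α) p := Filter.Eventually.of_forall hmin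
  have h := hloc.hasGradientAt_eq_zero (hasGradientAt_proxModel hG v a α)
  rw [← sub_eq_zero, ← h]
  abel

theorem gradient_add_eq_of_forall_proxModel_le {F G : H → ℝ} {a p : H} {α : ℝ}
    (hF : DifferentiableAt ℝ F p) (hG : DifferentiableAt ℝ G p)
    (hmin : ∀ x, proxModel G (gradient F a) a α p ≤ proxModel G (gradient F a) a α x) :
    gradient (fun x => F x + G x) p = (gradient F p - gradient F a) - α⁻¹ • (p - a) := by
  rw [(hF.hasGradientAt.add hG.hasGradientAt).gradient,
    hG.hasGradientAt.eq_of_forall_proxModel_le hmin]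
  abel

end

theorem norm_sub_extrapolate_le {E : Type*} [SeminormedAddCommGroup E] [NormedSpace ℝ E]
    {w : ℝ} (hw : 0 ≤ w) (p x y : E) : ‖p - (x + w • (x - y))‖ ≤ ‖p - x‖ + w * ‖x - y‖ := by
  calc ‖p - (x + w • (x - y))‖ = ‖(p - x) - w • (x - y)‖ := by rw [sub_add_eq_sub_sub]
    _ ≤ ‖p - x‖ + ‖w • (x - y)‖ := norm_sub_le _ _
    _ = ‖p - x‖ + w * ‖x - y‖ := by rw [norm_smul_of_nonneg hw]

theorem prox_step_gradient_bound_general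
    {H : Type*} [NormedAddCommGroup H] [InnerProductSpace ℝ H]
    [FiniteDimensional ℝ H]
    (F G : H → ℝ) (hF : ContDiff ℝ 1 F) (hG : ContDiff ℝ 1 G)
    (L : ℝ) (hL : 0 < L) (M : Set H)
    (hF_lip : ∀ x ∈ M, ∀ y ∈ M, ‖gradient F x - gradient F y‖ ≤ L * ‖x - y‖)
    (E : H → ℝ) (hE : E = fun x => F x + G x)
    (ᾱ α : ℝ) (hᾱ : 0 < ᾱ) (hαᾱ : ᾱ ≤ α)
    (Φkm Φk Φp Φt : H) (w : ℝ) (hw : w ∈ Set.Icc (0 : ℝ) 1)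
    (hΦt : Φt = Φk + w • (Φk - Φkm))
    (hmin : ∀ Φ : H,
      G Φp + ⟪gradient F Φt, Φp - Φt⟫ + (1 / (2 * α)) * ‖Φp - Φt‖ ^ 2
        ≤ G Φ + ⟪gradient F Φt, Φ - Φt⟫ + (1 / (2 * α)) * ‖Φ - Φt‖ ^ 2)
    (hmemt : Φt ∈ M) (hmemp : Φp ∈ M) :
    ‖gradient E Φp‖ ≤ (L + 1 / ᾱ) * (‖Φp - Φk‖ + w * ‖Φk - Φkm‖) := by
  have hα : 0 < α := hᾱ.trans_le hαᾱ
  have hEp : gradient E Φp = (gradient F Φp - gradient F Φt) - α⁻¹ • (Φp - Φt) := by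
    rw [hE]
    exact gradient_add_eq_of_forall_proxModel_le (hF.differentiable one_ne_zero Φp)
      (hG.differentiable one_ne_zero Φp) hmin
  calc ‖gradient E Φp‖ ≤ ‖gradient F Φp - gradient F Φt‖ + ‖α⁻¹ • (Φp - Φt)‖ :=
        hEp ▸ norm_sub_le _ _
    _ = ‖gradient F Φp - gradient F Φt‖ + α⁻¹ * ‖Φp - Φt‖ := by
        rw [norm_smul_of_nonneg (inv_nonneg.mpr hα.le)]
    _ ≤ L * ‖Φp - Φt‖ + ᾱ⁻¹ * ‖Φp - Φt‖ := by
        gcongr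
        exact hF_lip Φp hmemp Φt hmemt
    _ = (L + 1 / ᾱ) * ‖Φp - Φt‖ := by ring
    _ ≤ (L + 1 / ᾱ) * (‖Φp - Φk‖ + w * ‖Φk - Φkm‖) := by
        gcongr
        rw [hΦt]
        exact norm_sub_extrapolate_le hw.1 Φp Φk Φkm

/-- Bound on the gradient of the energy at the new iterate of the
(extrapolated) proximal gradient step: with `Φ̃ = Φ_k + w (Φ_k - Φ_{k-1})`,
step size `α ≥ ᾱ > 0`, and `∇F` being `L`-Lipschitz on the set `M` containing
`Φ̃` and `Φ_{k+1}`, one has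
`‖∇E(Φ_{k+1})‖ ≤ (L + 1/ᾱ)(‖Φ_{k+1} - Φ_k‖ + w ‖Φ_k - Φ_{k-1}‖)`. -/
theorem prox_step_gradient_bound
    {H : Type*} [NormedAddCommGroup H] [InnerProductSpace ℝ H]
    [FiniteDimensional ℝ H]
    (F G : H → ℝ) (hF : ContDiff ℝ 1 F) (hG : ContDiff ℝ 1 G)
    (hG_convex : ConvexOn ℝ Set.univ G)
    (L : ℝ) (hL : 0 < L) (M : Set H)
    (hF_lip : ∀ x ∈ M, ∀ y ∈ M, ‖gradient F x - gradient F y‖ ≤ L * ‖x - y‖)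
    (E : H → ℝ) (hE : E = fun x => F x + G x)
    (ᾱ α : ℝ) (hᾱ : 0 < ᾱ) (hαᾱ : ᾱ ≤ α)
    (Φkm Φk Φp Φt : H) (w : ℝ) (hw : w ∈ Set.Icc (0 : ℝ) 1)
    (hΦt : Φt = Φk + w • (Φk - Φkm))
    (hmin : ∀ Φ : H,
      G Φp + ⟪gradient F Φt, Φp - Φt⟫ + (1 / (2 * α)) * ‖Φp - Φt‖ ^ 2
        ≤ G Φ + ⟪gradient F Φt, Φ - Φt⟫ + (1 / (2 * α)) * ‖Φ - Φt‖ ^ 2)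
    (hmemt : Φt ∈ M) (hmemp : Φp ∈ M) :
    ‖gradient E Φp‖ ≤ (L + 1 / ᾱ) * (‖Φp - Φk‖ + w * ‖Φk - Φkm‖) :=
  prox_step_gradient_bound_general F G hF hG L hL M hF_lip E hE ᾱ α hᾱ hαᾱ Φkm Φk Φp Φt w hw hΦt
    hmin hmemt hmemp
end

section
/- Let H be a finite-dimensional real inner product space and E : H → ℝ continuously differentiable. Let (Φ_k) be a sequence in H, ℓ ∈ ℕ, ρ₁, ρ₂ > 0, w̄ ∈ [0,1), η > 0, E* ∈ ℝ, weights w_k ∈ [0, w̄], and a function ψ : [0, η) → ℝ continuous, continuously differentiable and concave on (0, η), with ψ(0) = 0 and ψ' > 0 on (0, η), such that for all k > ℓ: (i) E(Φ_k) − E(Φ_{k+1}) ≥ ρ₁‖Φ_{k+1} − Φ_k‖²; (ii) ‖∇E(Φ_k)‖ ≤ ρ₂(‖Φ_k − Φ_{k−1}‖ + w_{k−1}‖Φ_{k−1} − Φ_{k−2}‖); (iii) E* < E(Φ_k) < E* + η; and (iv) ψ'(E(Φ_k) − E*)‖∇E(Φ_k)‖ ≥ 1. Then the sequence has finite length, ∑_{k=0}^∞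 ‖Φ_{k+1} − Φ_k‖ < ∞, hence (Φ_k) converges to some Φ* ∈ H, and ∇E(Φ*) = 0. -/
/-!
With `e k = E (Φ k) - E*` and `a k = ‖Φ (k+1) - Φ k‖`, sufficient decrease, the KL inequality, the
gradient bound and the tangent inequality of the concave `ψ` combine into
`ρ₁ a k ^ 2 ≤ ρ₂ (a (k-1) + w̄ a (k-2)) (ψ (e k) - ψ (e (k+1)))`. By AM–GM this becomes a linear
recursion for `a` with a telescoping remainder, and since `ψ ≥ 0` the partial sums of `a` are
bounded. Finite length gives a Cauchy sequence; the gradient bound and continuity of `∇E` make the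
limit critical.
-/

open Filter Topology

theorem ConcaveOn.mul_sub_le_sub_of_hasDerivAt {S : Set ℝ} {f : ℝ → ℝ} {f' x y : ℝ}
    (hf : ConcaveOn ℝ S f) (hx : x ∈ S) (hy : y ∈ S) (hyx : y ≤ x) (hf' : HasDerivAt f f' x) :
    f' * (x - y) ≤ f x - f y := by
  rcases hyx.eq_or_lt with rfl | hlt
  · simp
  · have h := hf.le_slope_of_hasDerivAt hy hx hlt hf'
    rwa [slope_def_field, le_div_iff₀ (sub_pos.mpr hlt)] at h

theorem le_add_div_two_of_sq_le_mul {a x y : ℝ} (hx : 0 ≤ x) (hy : 0 ≤ y) (h : a ^ 2 ≤ x * y) :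
    a ≤ (x + y) / 2 := by
  nlinarith [sq_nonneg (x - y), sq_nonneg (x + y - 2 * a)]

theorem le_div_add_mul_of_mul_sq_le {ρ₁ ρ₂ a X Δ c : ℝ} (hρ₁ : 0 < ρ₁) (hρ₂ : 0 ≤ ρ₂) (hc : 0 < c)
    (hX : 0 ≤ X) (hΔ : 0 ≤ Δ) (h : ρ₁ * a ^ 2 ≤ ρ₂ * X * Δ) :
    a ≤ X / (2 * c) + c * ρ₂ / (2 * ρ₁) * Δ := by
  have hsq : a ^ 2 ≤ X / c * (c * ρ₂ / ρ₁ * Δ) := by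
    rw [show X / c * (c * ρ₂ / ρ₁ * Δ) = ρ₂ * X * Δ / ρ₁ by field_simp, le_div_iff₀ hρ₁]
    linarith
  calc a ≤ (X / c + c * ρ₂ / ρ₁ * Δ) / 2 :=
        le_add_div_two_of_sq_le_mul (by positivity) (by positivity) hsq
    _ = X / (2 * c) + c * ρ₂ / (2 * ρ₁) * Δ := by field_simp

/-- `a` is a step length, `d` the energy decrease, `g` the gradient norm, `p` the value of `ψ'`
and `Δ` the decrease of `ψ`. -/
theorem mul_sq_le_of_kl {ρ₁ ρ₂ a d g p Δ X : ℝ} (hρ₁ : 0 ≤ ρ₁) (hg : 0 ≤ g)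
    (hdec : ρ₁ * a ^ 2 ≤ d) (hKL : 1 ≤ p * g) (hψ : p * d ≤ Δ) (hgrad : g ≤ ρ₂ * X) :
    ρ₁ * a ^ 2 ≤ ρ₂ * X * Δ := by
  have hp : 0 ≤ p := (pos_of_mul_pos_left (one_pos.trans_le hKL) hg).le
  have hΔ : 0 ≤ Δ := (mul_nonneg hp ((mul_nonneg hρ₁ (sq_nonneg a)).trans hdec)).trans hψ
  calc ρ₁ * a ^ 2 ≤ ρ₁ * a ^ 2 * (p * g) := le_mul_of_one_le_right (by positivity) hKL
    _ = p * (ρ₁ * a ^ 2) * g := by ring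
    _ ≤ Δ * g := by gcongr; exact (mul_le_mul_of_nonneg_left hdec hp).trans hψ
    _ ≤ Δ * (ρ₂ * X) := by gcongr
    _ = ρ₂ * X * Δ := by ring

theorem summable_of_le_add_sub {a b : ℕ → ℝ} {α β m : ℝ} (ha : ∀ k, 0 ≤ a k) (hα : 0 ≤ α)
    (hβ : 0 ≤ β) (hαβ : α + β < 1) (hb : ∀ k, m ≤ b k)
    (h : ∀ k, a (k + 2) ≤ α * a (k + 1) + β * a k + (b k - b (k + 1))) : Summable a := by
  -- Lyapunov function absorbing the two lagged terms of the recursion.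
  set V : ℕ → ℝ := fun k => b k + (α + β) * a (k + 1) + β * a k
  have hV : ∀ k, (1 - α - β) * a (k + 2) ≤ V k - V (k + 1) := fun k => by
    simp only [V]; linarith [h k]
  have hVm : ∀ k, m ≤ V k := fun k => by
    have := ha k; have := ha (k + 1); simp only [V]; nlinarith [hb k]
  have hc : 0 < 1 - α - β := by linarith
  refine (summable_nat_add_iff 2).mp <| summable_of_sum_range_le (c := (V 0 - m) / (1 - α - β))
    (fun k => ha _) fun n => ?_
  rw [le_div_iff₀ hc, mul_comm, Finset.mul_sum]
  calc ∑ k ∈ Finset.range n, (1 - α - β) * a (k + 2)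
      ≤ ∑ k ∈ Finset.range n, (V k - V (k + 1)) := Finset.sum_le_sum fun k _ => hV k
    _ = V 0 - V n := Finset.sum_range_sub' V n
    _ ≤ V 0 - m := by linarith [hVm n]

theorem summable_of_kl_descent {a e g : ℕ → ℝ} {ψ ψ' : ℝ → ℝ} {η ρ₁ ρ₂ wbar : ℝ} {ℓ : ℕ}
    (hψ_deriv : ∀ s ∈ Set.Ioo (0 : ℝ) η, HasDerivAt ψ (ψ' s) s)
    (hψ_concave : ConcaveOn ℝ (Set.Ico 0 η) ψ) (hψ0 : ψ 0 = 0)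
    (hρ₁ : 0 < ρ₁) (hρ₂ : 0 ≤ ρ₂) (hwbar : 0 ≤ wbar) (ha : ∀ k, 0 ≤ a k) (hg : ∀ k, 0 ≤ g k)
    (hdec : ∀ k > ℓ, ρ₁ * a k ^ 2 ≤ e k - e (k + 1))
    (hgrad : ∀ k ≥ ℓ, g (k + 2) ≤ ρ₂ * (a (k + 1) + wbar * a k))
    (hloc : ∀ k > ℓ, e k ∈ Set.Ioo 0 η)
    (hKL : ∀ k > ℓ, 1 ≤ ψ' (e k) * g k) : Summable a := by
  have hψ_tangent : ∀ k > ℓ, ∀ y ∈ Set.Ico 0 η, y ≤ e k →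
      ψ' (e k) * (e k - y) ≤ ψ (e k) - ψ y := fun k hk y hy hyk =>
    hψ_concave.mul_sub_le_sub_of_hasDerivAt (Set.Ioo_subset_Ico_self (hloc k hk)) hy hyk
      (hψ_deriv _ (hloc k hk))
  have hψ'_nonneg : ∀ k > ℓ, 0 ≤ ψ' (e k) := fun k hk =>
    (pos_of_mul_pos_left (one_pos.trans_le (hKL k hk)) (hg k)).le
  have hψ_nonneg : ∀ k > ℓ, 0 ≤ ψ (e k) := fun k hk => by
    have := hψ_tangent k hk 0 ⟨le_rfl, (hloc k hk).1.trans (hloc k hk).2⟩ (hloc k hk).1.le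
    simp only [hψ0, sub_zero] at this
    exact (mul_nonneg (hψ'_nonneg k hk) (hloc k hk).1.le).trans this
  set C := (1 + wbar) * ρ₂ / (2 * ρ₁) with hC_def
  have hC : 0 ≤ C := by positivity
  -- AM–GM with weight `1 + wbar` makes the coefficients of `a (j+1)` and `a j` sum to `1/2`.
  have key : ∀ j ≥ ℓ, a (j + 2) ≤ 1 / (2 * (1 + wbar)) * a (j + 1) + wbar / (2 * (1 + wbar)) * a j
      + (C * ψ (e (j + 2)) - C * ψ (e (j + 2 + 1))) := fun j hjℓ => by
    have hj : j + 2 > ℓ := by omega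
    have hψ_step : ψ' (e (j + 2)) * (e (j + 2) - e (j + 2 + 1))
        ≤ ψ (e (j + 2)) - ψ (e (j + 2 + 1)) := by
      refine hψ_tangent _ hj _ (Set.Ioo_subset_Ico_self (hloc _ (by omega))) ?_
      nlinarith [hdec _ hj, sq_nonneg (a (j + 2))]
    have hΔ := (mul_nonneg (hψ'_nonneg _ hj)
      ((mul_nonneg hρ₁.le (sq_nonneg _)).trans (hdec _ hj))).trans hψ_step
    have hX : 0 ≤ a (j + 1) + wbar * a j := by have := ha j; have := ha (j + 1); positivity
    have := le_div_add_mul_of_mul_sq_le hρ₁ hρ₂ (by positivity : 0 < 1 + wbar) hX hΔ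
      (mul_sq_le_of_kl hρ₁.le (hg _) (hdec _ hj) (hKL _ hj) hψ_step (hgrad j hjℓ))
    rw [hC_def]
    linarith [show (a (j + 1) + wbar * a j) / (2 * (1 + wbar))
      = 1 / (2 * (1 + wbar)) * a (j + 1) + wbar / (2 * (1 + wbar)) * a j by ring]
  have hαβ : 1 / (2 * (1 + wbar)) + wbar / (2 * (1 + wbar)) < 1 := by
    rw [← add_div, div_lt_one (by positivity)]; linarith
  refine (summable_nat_add_iff ℓ).mp ?_
  simp_rw [add_comm _ ℓ]
  exact summable_of_le_add_sub (b := fun k => C * ψ (e (ℓ + k + 2))) (m := 0)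
    (fun k => ha _) (by positivity) (by positivity) hαβ
    (fun k => mul_nonneg hC (hψ_nonneg _ (by omega))) (fun k => key (ℓ + k) (by omega))

theorem ContDiff.continuous_gradient {H : Type*} [NormedAddCommGroup H] [InnerProductSpace ℝ H]
    [CompleteSpace H] {f : H → ℝ} (hf : ContDiff ℝ 1 f) : Continuous (gradient f) :=
  (InnerProductSpace.toDual ℝ H).symm.continuous.comp (hf.continuous_fderiv one_ne_zero)

theorem adaptive_apg_global_convergence_general
    {H : Type*} [NormedAddCommGroup H] [InnerProductSpace ℝ H]
    [FiniteDimensional ℝ H]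
    (E : H → ℝ) (hE : ContDiff ℝ 1 E)
    (Estar η : ℝ)
    (ψ ψ' : ℝ → ℝ)
    (hψ_deriv : ∀ s ∈ Set.Ioo (0 : ℝ) η, HasDerivAt ψ (ψ' s) s)
    (hψ_concave : ConcaveOn ℝ (Set.Ico 0 η) ψ)
    (hψ0 : ψ 0 = 0)
    (Φ : ℕ → H) (ℓ : ℕ) (ρ₁ ρ₂ wbar : ℝ)
    (hρ₁ : 0 < ρ₁) (hρ₂ : 0 < ρ₂)
    (w : ℕ → ℝ) (hw : ∀ k : ℕ, w k ∈ Set.Icc (0 : ℝ) wbar)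
    (hdec : ∀ k > ℓ, ρ₁ * ‖Φ (k + 1) - Φ k‖ ^ 2 ≤ E (Φ k) - E (Φ (k + 1)))
    (hgrad : ∀ k > ℓ, ‖gradient E (Φ k)‖
      ≤ ρ₂ * (‖Φ k - Φ (k - 1)‖ + w (k - 1) * ‖Φ (k - 1) - Φ (k - 2)‖))
    (hloc : ∀ k > ℓ, Estar < E (Φ k) ∧ E (Φ k) < Estar + η)
    (hKL : ∀ k > ℓ, 1 ≤ ψ' (E (Φ k) - Estar) * ‖gradient E (Φ k)‖) :
    Summable (fun k : ℕ => ‖Φ (k + 1) - Φ k‖)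
      ∧ ∃ Φstar : H, Tendsto Φ atTop (nhds Φstar) ∧ gradient E Φstar = 0 := by
  have hwbar : 0 ≤ wbar := (hw 0).1.trans (hw 0).2
  have hgrad₂ : ∀ k ≥ ℓ, ‖gradient E (Φ (k + 2))‖
      ≤ ρ₂ * (‖Φ (k + 2) - Φ (k + 1)‖ + wbar * ‖Φ (k + 1) - Φ k‖) := fun k hk =>
    (show _ ≤ ρ₂ * (‖Φ (k + 2) - Φ (k + 1)‖ + w (k + 1) * ‖Φ (k + 1) - Φ k‖) from
      hgrad (k + 2) (by omega)).trans (by gcongr; exact (hw _).2)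
  have hsum : Summable fun k => ‖Φ (k + 1) - Φ k‖ :=
    summable_of_kl_descent hψ_deriv hψ_concave hψ0 hρ₁ hρ₂.le hwbar (fun _ => norm_nonneg _)
      (fun _ => norm_nonneg _) (fun k hk => by linarith [hdec k hk]) hgrad₂
      (fun k hk => ⟨sub_pos.2 (hloc k hk).1, by linarith [(hloc k hk).2]⟩) hKL
  obtain ⟨Φstar, hΦ⟩ := cauchySeq_tendsto_of_complete <|
    cauchySeq_of_summable_dist (f := Φ) (by simpa only [dist_eq_norm'] using hsum)
  refine ⟨hsum, Φstar, hΦ, ?_⟩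
  have hstep := hsum.tendsto_atTop_zero
  have hgrad_lim : Tendsto (fun k => gradient E (Φ (k + 2))) atTop (𝓝 0) :=
    squeeze_zero_norm' ((eventually_ge_atTop ℓ).mono hgrad₂) <| by
      simpa using ((hstep.comp (tendsto_add_atTop_nat 1)).add (hstep.const_mul wbar)).const_mul ρ₂
  exact tendsto_nhds_unique
    (((hE.continuous_gradient.tendsto Φstar).comp hΦ).comp (tendsto_add_atTop_nat 2)) hgrad_lim

/-- Global convergence (finite length property) of the adaptive APG iterates:
under sufficient decrease, the gradient bound, energy localization
`E* < E(Φ k) < E* + η`, and the Kurdyka–Łojasiewicz inequality with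
desingularizing function `ψ`, the sequence has finite length
`∑ ‖Φ_{k+1} - Φ_k‖ < ∞`, hence converges to some `Φ*`, and `∇E(Φ*) = 0`. -/
theorem adaptive_apg_global_convergence
    {H : Type*} [NormedAddCommGroup H] [InnerProductSpace ℝ H]
    [FiniteDimensional ℝ H]
    (E : H → ℝ) (hE : ContDiff ℝ 1 E)
    (Estar η : ℝ) (hη : 0 < η)
    (ψ ψ' : ℝ → ℝ)
    (hψ_cont : ContinuousOn ψ (Set.Ico 0 η))
    (hψ_deriv : ∀ s ∈ Set.Ioo (0 : ℝ) η, HasDerivAt ψ (ψ' s) s)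
    (hψ'_cont : ContinuousOn ψ' (Set.Ioo 0 η))
    (hψ_concave : ConcaveOn ℝ (Set.Ico 0 η) ψ)
    (hψ0 : ψ 0 = 0)
    (hψ'_pos : ∀ s ∈ Set.Ioo (0 : ℝ) η, 0 < ψ' s)
    (Φ : ℕ → H) (ℓ : ℕ) (ρ₁ ρ₂ wbar : ℝ)
    (hρ₁ : 0 < ρ₁) (hρ₂ : 0 < ρ₂) (hwbar : wbar ∈ Set.Ico (0 : ℝ) 1)
    (w : ℕ → ℝ) (hw : ∀ k : ℕ, w k ∈ Set.Icc (0 : ℝ) wbar)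
    (hdec : ∀ k > ℓ, ρ₁ * ‖Φ (k + 1) - Φ k‖ ^ 2 ≤ E (Φ k) - E (Φ (k + 1)))
    (hgrad : ∀ k > ℓ, ‖gradient E (Φ k)‖
      ≤ ρ₂ * (‖Φ k - Φ (k - 1)‖ + w (k - 1) * ‖Φ (k - 1) - Φ (k - 2)‖))
    (hloc : ∀ k > ℓ, Estar < E (Φ k) ∧ E (Φ k) < Estar + η)
    (hKL : ∀ k > ℓ, 1 ≤ ψ' (E (Φ k) - Estar) * ‖gradient E (Φ k)‖) :
    Summable (fun k : ℕ => ‖Φ (k + 1) - Φ k‖)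
      ∧ ∃ Φstar : H, Tendsto Φ atTop (nhds Φstar) ∧ gradient E Φstar = 0 :=
  adaptive_apg_global_convergence_general E hE Estar η ψ ψ' hψ_deriv hψ_concave hψ0 Φ ℓ ρ₁ ρ₂ wbar
    hρ₁ hρ₂ w hw hdec hgrad hloc hKL
end

section
/- (Geometric inequality step.) Let H be a real inner product space, E : H → ℝ, E* ∈ ℝ, η > 0, ψ : [0, η) → ℝ continuous, continuously differentiable and concave on (0, η) with ψ(0) = 0 and ψ' > 0 on (0, η). Let ρ₁, ρ₂ > 0, C = ρ₂/ρ₁, w ∈ [0,1], and let Φ_{k−2}, Φ_{k−1}, Φ_k, Φ_{k+1} ∈ H satisfy: (i) E(Φ_k) − E(Φ_{k+1}) ≥ ρ₁‖Φ_{k+1} − Φ_k‖²; (ii) ‖∇E(Φ_k)‖ ≤ ρ₂(‖Φ_k − Φ_{k−1}‖ + w‖Φ_{k−1} − Φ_{k−2}‖); (iii) E* < E(Φ_{k+1}) ≤ E(Φ_k) < E* + η; and (iv) ψ'(E(Φ_k) − E*)‖∇E(Φ_k)‖ ≥ 1. Then, setting Δ = ψ(E(Φ_k) − E*) − ψ(E(Φ_{k+1})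 − E*), one has 2‖Φ_{k+1} − Φ_k‖ ≤ ‖Φ_k − Φ_{k−1}‖ + w‖Φ_{k−1} − Φ_{k−2}‖ + C·Δ. -/
/-- Geometric inequality step in the Kurdyka–Łojasiewicz convergence argument:
from sufficient decrease, the gradient bound, energy localization and the KL
inequality at `Φ_k`, with `C = ρ₂/ρ₁` and
`Δ = ψ(E(Φ_k) - E*) - ψ(E(Φ_{k+1}) - E*)`, one gets
`2 ‖Φ_{k+1} - Φ_k‖ ≤ ‖Φ_k - Φ_{k-1}‖ + w ‖Φ_{k-1} - Φ_{k-2}‖ + C Δ`. -/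
theorem kl_geometric_inequality_step
    {H : Type*} [NormedAddCommGroup H] [InnerProductSpace ℝ H] [CompleteSpace H]
    (E : H → ℝ) (Estar η : ℝ) (hη : 0 < η)
    (ψ ψ' : ℝ → ℝ)
    (hψ_cont : ContinuousOn ψ (Set.Ico 0 η))
    (hψ_deriv : ∀ s ∈ Set.Ioo (0 : ℝ) η, HasDerivAt ψ (ψ' s) s)
    (hψ'_cont : ContinuousOn ψ' (Set.Ioo 0 η))
    (hψ_concave : ConcaveOn ℝ (Set.Ico 0 η) ψ)
    (hψ0 : ψ 0 = 0)
    (hψ'_pos : ∀ s ∈ Set.Ioo (0 : ℝ) η, 0 < ψ' s)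
    (ρ₁ ρ₂ C w : ℝ) (hρ₁ : 0 < ρ₁) (hρ₂ : 0 < ρ₂)
    (hC : C = ρ₂ / ρ₁) (hw : w ∈ Set.Icc (0 : ℝ) 1)
    (Φkmm Φkm Φk Φkp : H)
    (hdec : ρ₁ * ‖Φkp - Φk‖ ^ 2 ≤ E Φk - E Φkp)
    (hgrad : ‖gradient E Φk‖ ≤ ρ₂ * (‖Φk - Φkm‖ + w * ‖Φkm - Φkmm‖))
    (hloc : Estar < E Φkp ∧ E Φkp ≤ E Φk ∧ E Φk < Estar + η)
    (hKL : 1 ≤ ψ' (E Φk - Estar) * ‖gradient E Φk‖) :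
    2 * ‖Φkp - Φk‖ ≤ ‖Φk - Φkm‖ + w * ‖Φkm - Φkmm‖
      + C * (ψ (E Φk - Estar) - ψ (E Φkp - Estar)) := by
  obtain ⟨h1, h2, h3⟩ := hloc
  set a := E Φk - Estar with ha_def
  set b := E Φkp - Estar with hb_def
  set d := ‖Φkp - Φk‖ with hd_def
  set S := ‖Φk - Φkm‖ + w * ‖Φkm - Φkmm‖ with hS_def
  clear_value a b d S
  have hd0 : 0 ≤ d := by rw [hd_def]; exact norm_nonneg _
  have hS0 : 0 ≤ S := by
    rw [hS_def]
    have h := norm_nonneg (Φk - Φkm)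
    have h' := mul_nonneg hw.1 (norm_nonneg (Φkm - Φkmm))
    positivity
  have ha : a ∈ Set.Ioo (0 : ℝ) η := ⟨by linarith, by linarith⟩
  have hψ'a : 0 < ψ' a := hψ'_pos a ha
  have hgpos : 0 < ‖gradient E Φk‖ := by
    by_contra h
    push_neg at h
    have : ‖gradient E Φk‖ = 0 := le_antisymm h (norm_nonneg _)
    rw [this, mul_zero] at hKL
    linarith
  have hgS : ‖gradient E Φk‖ ≤ ρ₂ * S := hgrad
  have hSpos : 0 < S := by
    by_contra h
    push_neg at h
    nlinarith [mul_nonpos_of_nonneg_of_nonpos hρ₂.le h]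
  have hψ'_ge : 1 ≤ ψ' a * (ρ₂ * S) := le_trans hKL (by nlinarith)
  clear hKL hgpos hgS hgrad hψ_cont hψ'_cont hψ0
  -- concavity: ψ a - ψ b ≥ ψ' a * (a - b)
  have hkey : ψ' a * (a - b) ≤ ψ a - ψ b := by
    rcases eq_or_lt_of_le (show b ≤ a by rw [ha_def, hb_def]; linarith) with heq | hba
    · rw [heq]; simp
    · have hb : b ∈ Set.Ico (0 : ℝ) η := ⟨by rw [hb_def]; linarith, by rw [hb_def]; linarith⟩
      have hslope := hψ_concave.le_slope_of_hasDerivAt hb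
        ⟨le_trans hb.1 hba.le, ha.2⟩ hba (hψ_deriv a ha)
      rw [slope_def_field] at hslope
      have hab : (0:ℝ) < a - b := by linarith
      rw [le_div_iff₀ hab] at hslope
      linarith
  have hab_d : ρ₁ * d ^ 2 ≤ a - b := by rw [ha_def, hb_def]; linarith
  clear hdec hψ_deriv hψ'_pos hψ_concave ha_def hb_def hd_def hS_def h1 h2 h3 ha hw E Estar w Φkmm Φkm Φk Φkp
  -- C Δ ≥ d² / S
  have hCΔ : d ^ 2 / S ≤ C * (ψ a - ψ b) := by
    have h7 : d ^ 2 ≤ d ^ 2 * (ψ' a * (ρ₂ * S)) := by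
      nlinarith [mul_le_mul_of_nonneg_left hψ'_ge (sq_nonneg d)]
    have h8 : ρ₁ * d ^ 2 * ψ' a ≤ ψ a - ψ b := by
      nlinarith [mul_le_mul_of_nonneg_right hab_d hψ'a.le]
    rw [hC, div_le_iff₀ hSpos]
    have heq : ρ₂ / ρ₁ * (ψ a - ψ b) * S = ρ₂ * ((ψ a - ψ b) * S) / ρ₁ := by
      ring
    rw [heq, le_div_iff₀ hρ₁]
    nlinarith [mul_le_mul_of_nonneg_right h8 (mul_nonneg hρ₂.le hS0),
      mul_le_mul_of_nonneg_right h7 hρ₁.le]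
  have hamgm : 2 * d ≤ S + d ^ 2 / S := by
    have h9 : 2 * d * S ≤ (S + d ^ 2 / S) * S := by
      have hexp : (S + d ^ 2 / S) * S = S * S + d ^ 2 := by
        field_simp
      rw [hexp]
      nlinarith [sq_nonneg (d - S)]
    exact le_of_mul_le_mul_right h9 hSpos
  linarith [hamgm, hCΔ]
end

section
/- (Stabilized semi-implicit scheme as a generalized proximal step.) Let H be a finite-dimensional real inner product space, L : H → H an invertible self-adjoint linear operator, σ > 0, α > 0, and suppose I − σαL is invertible and S := −(I − σαL)⁻¹ L is a positive definite self-adjoint operator. Let F, G : H → ℝ be continuously differentiable with G convex. Then a point Φ₊ satisfies the stabilized semi-implicit scheme (Φ₊ − Φ₀)/α = L(∇G(Φ₊) + ∇F(Φ₀) + σ(Φ₊ − Φ₀)) if and only if Φ₊ ∈ argmin_Φ { αG(Φ) + (1/2)⟨Φ − b, S⁻¹(Φ − b)⟩ } with b = Φ₀ − αS∇F(Φ₀), i.e. Φ₊ = GProx_{αG, S⁻¹}(Φ₀ − αS∇F(Φ₀)). -/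
/-!
The scheme is linear in `Φ₊` except for `∇G(Φ₊)`; inverting `L` and using `S⁻¹ = -L⁻¹(I - σαL)`
rewrites it as the stationarity condition `α∇G(Φ₊) + S⁻¹(Φ₊ - b) = 0` of the proximal
objective. That objective is convex, `G` being convex and `S⁻¹` positive semidefinite, so it is
above its tangent planes and stationarity is equivalent to global minimality.
-/

open RealInnerProductSpace InnerProductSpace Set

/-- `x ∈ GProx_{g,S}(y) = argmin_z { g z + (1/2) ‖z - y‖_S² }`. -/
def IsGProx {E : Type*} [NormedAddCommGroup E] [InnerProductSpace ℝ E]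
    (g : E → ℝ) (S : E →L[ℝ] E) (y x : E) : Prop :=
  ∀ z, g x + (1 / 2) * ⟪x - y, S (x - y)⟫ ≤ g z + (1 / 2) * ⟪z - y, S (z - y)⟫

section FirstOrder

variable {E : Type*} [NormedAddCommGroup E] [NormedSpace ℝ E] {f : E → ℝ} {f' : E →L[ℝ] ℝ}
  {x : E}

theorem ConvexOn.add_fderiv_sub_le (hf : ConvexOn ℝ univ f) (hx : HasFDerivAt f f' x) (y : E) :
    f x + f' (y - x) ≤ f y := by
  set φ : ℝ → ℝ := fun t => f (t • (y - x) + x)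
  have hφ : ConvexOn ℝ univ φ := by
    simpa [φ, Function.comp_def, AffineMap.lineMap_apply] using
      hf.comp_affineMap (AffineMap.lineMap x y : ℝ →ᵃ[ℝ] E)
  have hline : HasDerivAt (fun t : ℝ => t • (y - x) + x) (y - x) 0 := by
    simpa using ((hasDerivAt_id (0 : ℝ)).smul_const (y - x)).add_const x
  have hφ' : HasDerivAt φ (f' (y - x)) 0 := by
    refine HasFDerivAt.comp_hasDerivAt (l := f) 0 ?_ hline
    simpa using hx
  have hslope := hφ.le_slope_of_hasDerivAt (mem_univ 0) (mem_univ 1) one_pos hφ'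
  simp only [slope_def_field, φ, zero_smul, zero_add, one_smul, sub_add_cancel, sub_zero,
    div_one] at hslope
  linarith

theorem HasFDerivAt.forall_le_iff_eq_zero (hx : HasFDerivAt f f' x)
    (htangent : ∀ y, f x + f' (y - x) ≤ f y) : (∀ y, f x ≤ f y) ↔ f' = 0 := by
  refine ⟨fun hmin => IsLocalMin.hasFDerivAt_eq_zero (.of_forall hmin) hx, fun h y => ?_⟩
  simpa [h] using htangent y

end FirstOrder

theorem LinearMap.IsSymmetric.of_rightInverse {𝕜 F : Type*} [RCLike 𝕜] [NormedAddCommGroup F]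
    [InnerProductSpace 𝕜 F] {S T : F →ₗ[𝕜] F} (hS : S.IsSymmetric)
    (h : Function.RightInverse T S) : T.IsSymmetric := fun x y => by
  conv_lhs => rw [← h y, ← hS, h x]

theorem inner_map_self_nonneg_of_rightInverse {E : Type*} [NormedAddCommGroup E]
    [InnerProductSpace ℝ E] {S T : E → E} (hS : ∀ x, 0 ≤ ⟪x, S x⟫)
    (h : Function.RightInverse T S) (x : E) : 0 ≤ ⟪x, T x⟫ := by
  simpa only [h x, real_inner_comm] using hS (T x)

section QuadraticForm

variable {E : Type*} [NormedAddCommGroup E] [InnerProductSpace ℝ E] {A : E →L[ℝ] E}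

theorem inner_add_map_add (hA : (A : E →ₗ[ℝ] E).IsSymmetric) (v w : E) :
    ⟪v + w, A (v + w)⟫ = ⟪v, A v⟫ + 2 * ⟪A v, w⟫ + ⟪w, A w⟫ := by
  have hsymm : ⟪v, A w⟫ = ⟪A v, w⟫ := (hA v w).symm
  simp only [map_add, inner_add_left, inner_add_right, hsymm, real_inner_comm (A v) w]
  ring

theorem hasFDerivAt_half_inner_sub_map_sub [CompleteSpace E]
    (hA : (A : E →ₗ[ℝ] E).IsSymmetric) (y x : E) :
    HasFDerivAt (fun z => (1 / 2) * ⟪z - y, A (z - y)⟫) (toDual ℝ E (A (x - y))) x := by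
  have hsub : HasFDerivAt (fun z : E => z - y) (ContinuousLinearMap.id ℝ E) x :=
    (hasFDerivAt_id x).sub_const y
  refine ((hsub.inner ℝ (A.hasFDerivAt.comp x hsub)).const_mul (1 / 2 : ℝ)).congr_fderiv ?_
  ext v
  have hsymm : ⟪x - y, A v⟫ = ⟪A (x - y), v⟫ := (hA (x - y) v).symm
  simp only [smul_apply, ContinuousLinearMap.comp_apply,
    ContinuousLinearMap.prod_apply, ContinuousLinearMap.id_apply, fderivInnerCLM_apply,
    Function.comp_apply, toDual_apply_apply, smul_eq_mul, hsymm, real_inner_comm v]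
  ring

theorem isGProx_iff_hasGradientAt_add_eq_zero [CompleteSpace E] {g : E → ℝ} {g' : E}
    (hg : ConvexOn ℝ univ g) (hgx : HasGradientAt g g' x)
    (hA : (A : E →ₗ[ℝ] E).IsSymmetric) (hApos : ∀ v, 0 ≤ ⟪v, A v⟫) (y : E) :
    IsGProx g A y x ↔ g' + A (x - y) = 0 := by
  have hJ := hgx.hasFDerivAt.add (hasFDerivAt_half_inner_sub_map_sub hA y x)
  rw [← map_add] at hJ
  have htangent : ∀ z, (g x + (1 / 2) * ⟪x - y, A (x - y)⟫)
      + toDual ℝ E (g' + A (x - y)) (z - x) ≤ g z + (1 / 2) * ⟪z - y, A (z - y)⟫ := by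
    intro z
    have hgz := hg.add_fderiv_sub_le hgx.hasFDerivAt z
    have hexp := inner_add_map_add hA (x - y) (z - x)
    rw [sub_add_sub_cancel'] at hexp
    simp only [toDual_apply_apply, inner_add_left] at hgz ⊢
    linarith [hApos (z - x)]
  exact (hJ.forall_le_iff_eq_zero htangent).trans (LinearIsometryEquiv.map_eq_zero_iff _)

end QuadraticForm

theorem stabilized_semi_implicit_as_generalized_prox_general
    {H : Type*} [NormedAddCommGroup H] [InnerProductSpace ℝ H]
    [FiniteDimensional ℝ H]
    (L Linv : H →L[ℝ] H)
    (hLinv1 : ∀ x : H, Linv (L x) = x) (hLinv2 : ∀ x : H, L (Linv x) = x)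
    (σ α : ℝ) (hα : 0 < α)
    (T Tinv : H →L[ℝ] H)
    (hT : T = ContinuousLinearMap.id ℝ H - (σ * α) • L)
    (hTinv1 : ∀ x : H, Tinv (T x) = x) (hTinv2 : ∀ x : H, T (Tinv x) = x)
    (S Sinv : H →L[ℝ] H)
    (hS : S = -(Tinv.comp L)) (hSinv : Sinv = -(Linv.comp T))
    (hSsym : ∀ x y : H, ⟪S x, y⟫ = ⟪x, S y⟫)
    (hSpos : ∀ x : H, x ≠ 0 → 0 < ⟪x, S x⟫)
    (F G : H → ℝ) (hG : ContDiff ℝ 1 G)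
    (hG_convex : ConvexOn ℝ Set.univ G)
    (Φ₀ Φp b : H) (hb : b = Φ₀ - α • S (gradient F Φ₀)) :
    ((1 / α) • (Φp - Φ₀) = L (gradient G Φp + gradient F Φ₀ + σ • (Φp - Φ₀)))
      ↔ (∀ Φ : H, α * G Φp + (1 / 2) * ⟪Φp - b, Sinv (Φp - b)⟫
          ≤ α * G Φ + (1 / 2) * ⟪Φ - b, Sinv (Φ - b)⟫) := by
  set d := Φp - Φ₀
  set v := gradient G Φp + gradient F Φ₀ + σ • d
  have hSSinv : Function.RightInverse Sinv S := fun x => by simp [hS, hSinv, hLinv2, hTinv1]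
  have hSinvS : Function.RightInverse S Sinv := fun x => by simp [hS, hSinv, hLinv1, hTinv2]
  have hstationary : α • gradient G Φp + Sinv (Φp - b) = α • v - Linv d := by
    have hsplit : Φp - b = d + α • S (gradient F Φ₀) := by simp only [hb, d]; abel
    rw [hsplit, map_add, map_smul, hSinvS, hSinv, hT]
    simp only [neg_apply, ContinuousLinearMap.comp_apply, sub_apply, ContinuousLinearMap.id_apply,
      smul_apply, map_sub, map_smul, hLinv1]
    module
  have hgradG : HasGradientAt (fun Φ => α * G Φ) (α • gradient G Φp) Φp := by
    rw [hasGradientAt_iff_hasFDerivAt, map_smul]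
    exact ((hG.differentiable one_ne_zero).differentiableAt.hasGradientAt).hasFDerivAt.const_mul α
  have hSnonneg : ∀ x, 0 ≤ ⟪x, S x⟫ := fun x =>
    (eq_or_ne x 0).elim (fun h => by simp [h]) fun h => (hSpos x h).le
  have hprox := isGProx_iff_hasGradientAt_add_eq_zero (hG_convex.smul hα.le) hgradG
    (LinearMap.IsSymmetric.of_rightInverse (S := (S : H →ₗ[ℝ] H)) hSsym hSSinv)
    (inner_map_self_nonneg_of_rightInverse hSnonneg hSSinv) b
  calc (1 / α) • d = L v ↔ d = L (α • v) := by rw [map_smul, one_div, inv_smul_eq_iff₀ hα.ne']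
    _ ↔ Linv d = α • v :=
      (ContinuousLinearEquiv.equivOfInverse L Linv hLinv1 hLinv2).symm_apply_eq.symm
    _ ↔ α • gradient G Φp + Sinv (Φp - b) = 0 := by rw [hstationary, sub_eq_zero, eq_comm]
    _ ↔ IsGProx (fun Φ => α * G Φ) Sinv b Φp := hprox.symm

/-- The stabilized semi-implicit scheme as a generalized proximal step:
with `T = I - σαL` invertible and `S = -(T⁻¹ ∘ L)` positive definite and
self-adjoint, `Φ₊` satisfies
`(Φ₊ - Φ₀)/α = L(∇G(Φ₊) + ∇F(Φ₀) + σ(Φ₊ - Φ₀))` if and only if `Φ₊`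
minimizes `Φ ↦ α G(Φ) + (1/2)⟪Φ - b, S⁻¹(Φ - b)⟫` where
`b = Φ₀ - α S ∇F(Φ₀)`, i.e. `Φ₊ = GProx_{αG, S⁻¹}(Φ₀ - α S ∇F(Φ₀))`. -/
theorem stabilized_semi_implicit_as_generalized_prox
    {H : Type*} [NormedAddCommGroup H] [InnerProductSpace ℝ H]
    [FiniteDimensional ℝ H]
    (L Linv : H →L[ℝ] H)
    (hLinv1 : ∀ x : H, Linv (L x) = x) (hLinv2 : ∀ x : H, L (Linv x) = x)
    (hLsym : ∀ x y : H, ⟪L x, y⟫ = ⟪x, L y⟫)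
    (σ α : ℝ) (hσ : 0 < σ) (hα : 0 < α)
    (T Tinv : H →L[ℝ] H)
    (hT : T = ContinuousLinearMap.id ℝ H - (σ * α) • L)
    (hTinv1 : ∀ x : H, Tinv (T x) = x) (hTinv2 : ∀ x : H, T (Tinv x) = x)
    (S Sinv : H →L[ℝ] H)
    (hS : S = -(Tinv.comp L)) (hSinv : Sinv = -(Linv.comp T))
    (hSsym : ∀ x y : H, ⟪S x, y⟫ = ⟪x, S y⟫)
    (hSpos : ∀ x : H, x ≠ 0 → 0 < ⟪x, S x⟫)
    (F G : H → ℝ) (hF : ContDiff ℝ 1 F) (hG : ContDiff ℝ 1 G)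
    (hG_convex : ConvexOn ℝ Set.univ G)
    (Φ₀ Φp b : H) (hb : b = Φ₀ - α • S (gradient F Φ₀)) :
    ((1 / α) • (Φp - Φ₀) = L (gradient G Φp + gradient F Φ₀ + σ • (Φp - Φ₀)))
      ↔ (∀ Φ : H, α * G Φp + (1 / 2) * ⟪Φp - b, Sinv (Φp - b)⟫
          ≤ α * G Φ + (1 / 2) * ⟪Φ - b, Sinv (Φ - b)⟫) :=
  stabilized_semi_implicit_as_generalized_prox_general L Linv hLinv1 hLinv2 σ α hα T Tinv hT hTinv1
    hTinv2 S Sinv hS hSinv hSsym hSpos F G hG hG_convex Φ₀ Φp b hb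
end
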